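/- arXiv:1709.10441 — 4 statements merged into one kernel-verified Lean document; each statement's English description precedes it below -/
import Mathlib

section
/- Iterated projection identity for composed evaluations: Let H_1, …, H_L be vector-valued reproducing kernel Hilbert spaces with kernels K_1, …, K_L, where functions in H_l have domain D_l and range R_l ⊆ ℝ^{d_l}, with R_l ⊆ D_{l−1} for l = 2, …, L and D_L = Ω. Fix f_l ∈ H_l for l = 1, …, L and points x_1, …, x_N ∈ Ω, and set Ṽ_l = span{ K_l(f_{l+1} ∘ … ∘ f_L(x_i), ·) e_k : i = 1, …, N, k = 1, …, d_l } with orthogonal projection Π_{Ṽ_l} : H_l → Ṽ_l. Then for every l = 1, …, L and every i = 1, …, N, f_l ∘ f_{l+1} ∘ … ∘ f_L(x_i) = Π_{Ṽ_l}(f_l) ∘ Π_{Ṽ_{l+1}}(f_{l+1}) ∘ … ∘ Π_{Ṽ_L}(f_L)(x_i). -/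
open scoped RealInnerProductSpace

noncomputable section

/-- `ℝ^n` with the Euclidean (ℓ²) structure. -/
abbrev Euc (n : ℕ) : Type := EuclideanSpace ℝ (Fin n)

/-- A (vector-valued) reproducing kernel Hilbert space of functions from `D` to `ℝ^n`. -/
structure VRKHS (D : Type*) (n : ℕ) (H : Type*)
    [NormedAddCommGroup H] [InnerProductSpace ℝ H] where
  eval : H →ₗ[ℝ] D → Euc n
  eval_injective : Function.Injective eval
  K : D → D → Euc n →L[ℝ] Euc n
  kfun : D → Euc n → H
  eval_kfun : ∀ (x : D) (c : Euc n) (z : D), eval (kfun x c) z = K x z c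
  repro : ∀ (g : H) (x : D) (c : Euc n), ⟪g, kfun x c⟫ = ⟪c, eval g x⟫

/-- **Iterated projection identity for composed evaluations**.
Layers are indexed by `l = 0, …, L-1` (`l = L-1` innermost, with domain `Ω = Dset (L-1)`);
functions of layer `l` map `Dset l ⊆ ℝ^{d (l+1)}` to `ℝ^{d l}`.  `C g l` is the composition
`g_l ∘ … ∘ g_{L-1}`, characterized by `hCtop`/`hCstep`.  `Vt l` is the span
`Ṽ_l = span{K_l(f_{l+1}∘…∘f_{L-1}(x_i), ·) e_k}`, and `Pf l` is the orthogonal projection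
of `f l` onto `Ṽ_l` (characterized by `Pf l ∈ Ṽ_l` and `f l - Pf l ∈ Ṽ_lᗮ`).  Then
`f_l ∘ … ∘ f_{L-1}(x_i) = Π_{Ṽ_l}(f_l) ∘ … ∘ Π_{Ṽ_{L-1}}(f_{L-1})(x_i)` for all `l, i`. -/
theorem iterated_projection_identity
    (L : ℕ) (hL : 0 < L)
    (d : ℕ → ℕ)
    (Dset : (l : ℕ) → Set (Euc (d (l + 1))))
    (H : ℕ → Type*) [∀ l, NormedAddCommGroup (H l)]
    [∀ l, InnerProductSpace ℝ (H l)] [∀ l, CompleteSpace (H l)]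
    (V : (l : ℕ) → VRKHS (Dset l) (d l) (H l))
    (hRange : ∀ l, l + 1 < L → ∀ (g : H (l + 1)) (z : Dset (l + 1)),
        (V (l + 1)).eval g z ∈ Dset l)
    (N : ℕ) (x : Fin N → Dset (L - 1))
    (C : (∀ l, H l) → (l : ℕ) → Dset (L - 1) → Euc (d l))
    (hCmem : ∀ g l, l + 1 < L → ∀ z, C g (l + 1) z ∈ Dset l)
    (hCtop : ∀ g z, C g (L - 1) z = (V (L - 1)).eval (g (L - 1)) z)
    (hCstep : ∀ g l (h : l + 1 < L) z,
        C g l z = (V l).eval (g l) ⟨C g (l + 1) z, hCmem g l h z⟩)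
    (f : ∀ l, H l)
    (Vt : (l : ℕ) → Submodule ℝ (H l))
    (hVt : ∀ l (h : l + 1 < L),
        Vt l = Submodule.span ℝ (Set.range fun p : Fin N × Fin (d l) =>
          (V l).kfun ⟨C f (l + 1) (x p.1), hCmem f l h (x p.1)⟩
            (EuclideanSpace.single p.2 1)))
    (hVtL : Vt (L - 1) = Submodule.span ℝ (Set.range fun p : Fin N × Fin (d (L - 1)) =>
        (V (L - 1)).kfun (x p.1) (EuclideanSpace.single p.2 1)))
    (Pf : ∀ l, H l)
    (hPfmem : ∀ l, l < L → Pf l ∈ Vt l)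
    (hPforth : ∀ l, l < L → f l - Pf l ∈ (Vt l)ᗮ) :
    ∀ l, l < L → ∀ i, C f l (x i) = C Pf l (x i) := by

  have hproj : ∀ l, l < L → ∀ (z : Dset l),
      (∀ k : Fin (d l), (V l).kfun z (EuclideanSpace.single k 1) ∈ Vt l) →
      (V l).eval (f l) z = (V l).eval (Pf l) z := by
    intro l hl z hz
    have horth := hPforth l hl
    ext k
    have h0 : ⟪(V l).kfun z (EuclideanSpace.single k 1), f l - Pf l⟫ = 0 :=
      (Submodule.mem_orthogonal _ _).mp horth _ (hz k)
    have h1 : ⟪f l - Pf l, (V l).kfun z (EuclideanSpace.single k 1)⟫ = 0 := by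
      rwa [real_inner_comm]
    rw [(V l).repro] at h1
    have h2 : (V l).eval (f l - Pf l) z = (V l).eval (f l) z - (V l).eval (Pf l) z := by
      rw [map_sub]; rfl
    rw [h2, EuclideanSpace.inner_single_left] at h1
    simpa [sub_eq_zero] using h1
  have main : ∀ k : ℕ, ∀ i, C f (L - 1 - k) (x i) = C Pf (L - 1 - k) (x i) := by
    intro k
    induction k with
    | zero =>
      intro i
      simp only [Nat.sub_zero]
      rw [hCtop, hCtop]
      exact hproj (L - 1) (Nat.sub_lt hL one_pos) (x i)
        (fun k => hVtL ▸ Submodule.subset_span ⟨(i, k), rfl⟩)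
    | succ k ih =>
      intro i
      by_cases h : L - 1 - (k + 1) = L - 1 - k
      · rw [h]; exact ih i
      · set l := L - 1 - (k + 1) with hldef
        have hl1 : l + 1 = L - 1 - k := by omega
        have hlt : l + 1 < L := by omega
        have hle : l < L := by omega
        have heq : C f (l + 1) (x i) = C Pf (l + 1) (x i) := by rw [hl1]; exact ih i
        rw [hCstep f l hlt (x i), hCstep Pf l hlt (x i)]
        have hpt : (⟨C f (l + 1) (x i), hCmem f l hlt (x i)⟩ : Dset l) =
            ⟨C Pf (l + 1) (x i), hCmem Pf l hlt (x i)⟩ := Subtype.ext heq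
        rw [← hpt]
        exact hproj l hle _ (fun k => (hVt l hlt) ▸ Submodule.subset_span ⟨(i, k), rfl⟩)
  intro l hl i
  have := main (L - 1 - l) i
  rwa [show L - 1 - (L - 1 - l) = l by omega] at this
end
end

section
/- Representer theorem for two-layer interpolation (Corollary 3.3): Let H(Φ,ℝ) be a reproducing kernel Hilbert space of continuous real-valued functions on Φ ⊆ ℝ^D with kernel K : Φ × Φ → ℝ, and let H(Ω,Φ) be a vector-valued reproducing kernel Hilbert space of continuous functions from Ω ⊆ ℝ^d to Φ with matrix-valued kernel 𝐊 : Ω × Ω → ℝ^{D×D}. Given pairwise distinct points x_1, …, x_N ∈ Ω and values y_1, …, y_N ∈ ℝ, consider minimizing J(f, g) = ‖f‖²_{H(Φ,ℝ)} + ‖g‖²_{H(Ω,Φ)} over all pairs (f, g) ∈ H(Φ,ℝ) × H(Ω,Φ) satisfying the interpolation constraints f(g(x_j)) = y_j for j = 1, …, N. Then any minimizer (f*, g*) satisfies g* ∈ V_X := span{ 𝐊(x_i, ·) e_j : i = 1, …, N, j = 1, …, D }, where e_j ∈ ℝ^D is the j-th unit vector. -/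
open scoped RealInnerProductSpace

noncomputable section

/-- A scalar-valued reproducing kernel Hilbert space of functions from `D` to `ℝ`. -/
structure ScalarRKHS (D : Type*) (H : Type*)
    [NormedAddCommGroup H] [InnerProductSpace ℝ H] where
  eval : H →ₗ[ℝ] D → ℝ
  eval_injective : Function.Injective eval
  K : D → D → ℝ
  kfun : D → H
  eval_kfun : ∀ x z, eval (kfun x) z = K x z
  repro : ∀ (f : H) (x : D), eval f x = ⟪f, kfun x⟫

/-! Let `g'` be the orthogonal projection of `g` onto the finite-dimensional space `V_X`. Since
`g - g'` is orthogonal to every `𝐊(x_j,·) e_i`, the reproducing property gives `g'(x_j) = g(x_j)`,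
so `(f, g')` is still admissible and minimality gives `‖g‖ ≤ ‖g'‖`. As an orthogonal projection
does not increase norms, `‖g'‖ = ‖g‖`, which happens only when `g ∈ V_X`. -/

namespace VRKHS

variable {Ω H : Type*} {n : ℕ} [NormedAddCommGroup H] [InnerProductSpace ℝ H]

theorem eval_eq_of_sub_mem_orthogonal (V : VRKHS Ω n H) {S : Submodule ℝ H} {x : Ω}
    (hS : ∀ i, V.kfun x (EuclideanSpace.single i 1) ∈ S) {g g' : H} (h : g - g' ∈ Sᗮ) :
    V.eval g x = V.eval g' x := by
  rw [← sub_eq_zero, ← Pi.sub_apply, ← map_sub]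
  ext i
  have hzero : ⟪EuclideanSpace.single i 1, V.eval (g - g') x⟫ = 0 := by
    rw [← V.repro, real_inner_comm]
    exact Submodule.inner_right_of_mem_orthogonal (hS i) h
  simpa [EuclideanSpace.inner_single_left] using hzero

end VRKHS

theorem two_layer_interpolation_representer_general
    (D d N : ℕ)
    (Φ : Set (Euc D)) (Ω : Set (Euc d))
    (Hout : Type*) [NormedAddCommGroup Hout] [InnerProductSpace ℝ Hout]
    (Hin : Type*) [NormedAddCommGroup Hin] [InnerProductSpace ℝ Hin]
    (Vout : ScalarRKHS (↥Φ) Hout)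
    (Vin : VRKHS (↥Ω) D Hin)
    (hrange : ∀ (g : Hin) (x : Ω), Vin.eval g x ∈ Φ)
    (x : Fin N → ↥Ω) (y : Fin N → ℝ)
    (f : Hout) (g : Hin)
    (hadm : ∀ j, Vout.eval f ⟨Vin.eval g (x j), hrange g (x j)⟩ = y j)
    (hmin : ∀ (f' : Hout) (g' : Hin),
        (∀ j, Vout.eval f' ⟨Vin.eval g' (x j), hrange g' (x j)⟩ = y j) →
        ‖f‖ ^ 2 + ‖g‖ ^ 2 ≤ ‖f'‖ ^ 2 + ‖g'‖ ^ 2) :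
    g ∈ Submodule.span ℝ (Set.range fun p : Fin N × Fin D =>
      Vin.kfun (x p.1) (EuclideanSpace.single p.2 1)) := by
  set V := Submodule.span ℝ (Set.range fun p : Fin N × Fin D =>
    Vin.kfun (x p.1) (EuclideanSpace.single p.2 1))
  have : FiniteDimensional ℝ V := FiniteDimensional.span_of_finite ℝ (Set.finite_range _)
  set g' := V.starProjection g
  have heval : ∀ j, Vin.eval g' (x j) = Vin.eval g (x j) := fun j =>
    (Vin.eval_eq_of_sub_mem_orthogonal (fun i => Submodule.subset_span (Set.mem_range_self (j, i)))
      (V.sub_starProjection_mem_orthogonal g)).symm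
  have hadm' : ∀ j, Vout.eval f ⟨Vin.eval g' (x j), hrange g' (x j)⟩ = y j := by
    simpa only [heval] using hadm
  have hle : ‖g‖ ≤ ‖g'‖ :=
    (pow_le_pow_iff_left₀ (norm_nonneg _) (norm_nonneg _) two_ne_zero).1
      (by linarith [hmin f g' hadm'])
  exact (V.mem_iff_norm_starProjection g).2 (le_antisymm (V.norm_starProjection_apply_le g) hle)

/-- **Representer theorem for two-layer interpolation** (Corollary 3.3).
`Hout` is an RKHS of continuous real-valued functions on `Φ ⊆ ℝ^D`, `Hin` a vector-valued
RKHS of continuous functions from `Ω ⊆ ℝ^d` with values in `Φ`.  If the pair `(f, g)`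
minimizes `J(f,g) = ‖f‖² + ‖g‖²` among all pairs satisfying the interpolation constraints
`f(g(x_j)) = y_j`, then `g ∈ V_X = span{𝐊(x_i,·) e_j : i = 1,…,N, j = 1,…,D}`. -/
theorem two_layer_interpolation_representer
    (D d N : ℕ)
    (Φ : Set (Euc D)) (Ω : Set (Euc d))
    (Hout : Type*) [NormedAddCommGroup Hout] [InnerProductSpace ℝ Hout] [CompleteSpace Hout]
    (Hin : Type*) [NormedAddCommGroup Hin] [InnerProductSpace ℝ Hin] [CompleteSpace Hin]
    (Vout : ScalarRKHS (↥Φ) Hout)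
    (houtCont : ∀ f : Hout, Continuous (Vout.eval f))
    (Vin : VRKHS (↥Ω) D Hin)
    (hinCont : ∀ g : Hin, Continuous (Vin.eval g))
    (hrange : ∀ (g : Hin) (x : Ω), Vin.eval g x ∈ Φ)
    (x : Fin N → ↥Ω) (hx : Function.Injective x) (y : Fin N → ℝ)
    (f : Hout) (g : Hin)
    (hadm : ∀ j, Vout.eval f ⟨Vin.eval g (x j), hrange g (x j)⟩ = y j)
    (hmin : ∀ (f' : Hout) (g' : Hin),
        (∀ j, Vout.eval f' ⟨Vin.eval g' (x j), hrange g' (x j)⟩ = y j) →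
        ‖f‖ ^ 2 + ‖g‖ ^ 2 ≤ ‖f'‖ ^ 2 + ‖g'‖ ^ 2) :
    g ∈ Submodule.span ℝ (Set.range fun p : Fin N × Fin D =>
      Vin.kfun (x p.1) (EuclideanSpace.single p.2 1)) :=
  two_layer_interpolation_representer_general D d N Φ Ω Hout Hin Vout Vin hrange x y f g hadm hmin
end
end

section
/- Representer theorem for two-layer regularized least-squares regression (Corollary 3.4): Let H(Φ,ℝ) be a reproducing kernel Hilbert space of continuous real-valued functions on Φ ⊆ ℝ^D with kernel K : Φ × Φ → ℝ, and let H(Ω,Φ) be a vector-valued reproducing kernel Hilbert space of continuous functions from Ω ⊆ ℝ^d to Φ with matrix-valued kernel 𝐊 : Ω × Ω → ℝ^{D×D}. Given pairwise distinct points x_1, …, x_N ∈ Ω, values y_1, …, y_N ∈ ℝ, and λ, μ > 0, consider minimizing J_{λ,μ}(f, g) = Σ_{j=1}^N |f(g(x_j)) − y_j|² + λ‖f‖²_{H(Φ,ℝ)} + μ‖g‖²_{H(Ω,Φ)} over (f, g) ∈ H(Φ,ℝ) × H(Ω,Φ). Then any minimizer (f^{λ}, g^{λ,μ}) satisfies g^{λ,μ}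 ∈ V_X := span{ 𝐊(x_i, ·) e_j : i = 1, …, N, j = 1, …, D }, where e_j ∈ ℝ^D is the j-th unit vector. -/
/-!
Orthogonally project `g` onto `V_X`. By the reproducing property, `⟪g, 𝐊(x_i, ·) e_j⟫` is the
`j`-th coordinate of `g(x_i)`, so the projection agrees with `g` at every data point and leaves the
data-fit term unchanged; by Pythagoras it has strictly smaller norm unless `g ∈ V_X`. Minimality
of `(f, g)` with `μ > 0` therefore forces `g ∈ V_X`.
-/

open scoped RealInnerProductSpace

noncomputable section

/-- A scalar-valued reproducing kernel Hilbert space of functions from `D` to `ℝ`. -/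
structure RKHS' (D : Type*) (H : Type*)
    [NormedAddCommGroup H] [InnerProductSpace ℝ H] where
  eval : H →ₗ[ℝ] D → ℝ
  eval_injective : Function.Injective eval
  K : D → D → ℝ
  kfun : D → H
  eval_kfun : ∀ x z, eval (kfun x) z = K x z
  repro : ∀ (f : H) (x : D), eval f x = ⟪f, kfun x⟫

namespace Submodule

variable {E : Type*} [NormedAddCommGroup E] [InnerProductSpace ℝ E]

theorem mem_of_norm_le_norm_starProjection {K : Submodule ℝ E} [K.HasOrthogonalProjection]
    {v : E} (h : ‖v‖ ≤ ‖K.starProjection v‖) : v ∈ K := by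
  have hperp : Kᗮ.starProjection v = 0 := by
    have hpyth := norm_sq_eq_add_norm_sq_starProjection v K
    have hsq : ‖Kᗮ.starProjection v‖ ^ 2 ≤ 0 := by nlinarith [norm_nonneg v]
    simpa using hsq
  have hsplit := K.starProjection_add_starProjection_orthogonal v
  rw [hperp, add_zero] at hsplit
  exact starProjection_eq_self_iff.mp hsplit

end Submodule

namespace VRKHS

variable {X H ι : Type*} {n : ℕ} [NormedAddCommGroup H] [InnerProductSpace ℝ H]

/-- The space `V_X` of the paper. -/
def kernelSpan (V : VRKHS X n H) (x : ι → X) : Submodule ℝ H :=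
  Submodule.span ℝ (Set.range fun p : ι × Fin n => V.kfun (x p.1) (EuclideanSpace.single p.2 1))

instance (V : VRKHS X n H) (x : ι → X) [Finite ι] : FiniteDimensional ℝ (V.kernelSpan x) :=
  FiniteDimensional.span_of_finite ℝ (Set.finite_range _)

theorem inner_kfun_single (V : VRKHS X n H) (g : H) (x : X) (i : Fin n) :
    ⟪g, V.kfun x (EuclideanSpace.single i 1)⟫ = V.eval g x i := by
  rw [V.repro, EuclideanSpace.inner_single_left, map_one, one_mul]

theorem eval_eq_zero_of_mem_orthogonal_kernelSpan (V : VRKHS X n H) (x : ι → X) {w : H}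
    (hw : w ∈ (V.kernelSpan x)ᗮ) (j : ι) : V.eval w (x j) = 0 := by
  ext i
  rw [← inner_kfun_single, PiLp.zero_apply]
  exact (Submodule.mem_orthogonal' _ _).mp hw _ (Submodule.subset_span ⟨(j, i), rfl⟩)

theorem eval_starProjection_kernelSpan (V : VRKHS X n H) (x : ι → X)
    [(V.kernelSpan x).HasOrthogonalProjection] (g : H) (j : ι) :
    V.eval ((V.kernelSpan x).starProjection g) (x j) = V.eval g (x j) := by
  have h := V.eval_eq_zero_of_mem_orthogonal_kernelSpan x
    ((V.kernelSpan x).sub_starProjection_mem_orthogonal g) j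
  rw [map_sub, Pi.sub_apply, sub_eq_zero] at h
  exact h.symm

end VRKHS

theorem two_layer_least_squares_representer_general
    (D d N : ℕ)
    (Φ : Set (Euc D)) (Ω : Set (Euc d))
    (Hout : Type*) [NormedAddCommGroup Hout] [InnerProductSpace ℝ Hout]
    (Hin : Type*) [NormedAddCommGroup Hin] [InnerProductSpace ℝ Hin]
    (Vout : RKHS' (↥Φ) Hout)
    (Vin : VRKHS (↥Ω) D Hin)
    (hrange : ∀ (g : Hin) (x : Ω), Vin.eval g x ∈ Φ)
    (x : Fin N → ↥Ω) (y : Fin N → ℝ)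
    (lam mu : ℝ) (hmu : 0 < mu)
    (f : Hout) (g : Hin)
    (hmin : ∀ (f' : Hout) (g' : Hin),
        (∑ j, |Vout.eval f ⟨Vin.eval g (x j), hrange g (x j)⟩ - y j| ^ 2)
            + lam * ‖f‖ ^ 2 + mu * ‖g‖ ^ 2 ≤
          (∑ j, |Vout.eval f' ⟨Vin.eval g' (x j), hrange g' (x j)⟩ - y j| ^ 2)
            + lam * ‖f'‖ ^ 2 + mu * ‖g'‖ ^ 2) :
    g ∈ Submodule.span ℝ (Set.range fun p : Fin N × Fin D =>
      Vin.kfun (x p.1) (EuclideanSpace.single p.2 1)) := by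
  change g ∈ Vin.kernelSpan x
  set g₀ := (Vin.kernelSpan x).starProjection g
  have hdata : ∀ j,
      (⟨Vin.eval g₀ (x j), hrange g₀ (x j)⟩ : Φ) = ⟨Vin.eval g (x j), hrange g (x j)⟩ :=
    fun j => Subtype.ext (Vin.eval_starProjection_kernelSpan x g j)
  have hsq : ‖g‖ ^ 2 ≤ ‖g₀‖ ^ 2 := by
    have hle := hmin f g₀
    simp only [hdata] at hle
    exact le_of_mul_le_mul_left (by linarith) hmu
  exact Submodule.mem_of_norm_le_norm_starProjection
    ((pow_le_pow_iff_left₀ (norm_nonneg _) (norm_nonneg _) two_ne_zero).mp hsq)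

/-- **Representer theorem for two-layer regularized least-squares regression**
(Corollary 3.4).  `Hout` is an RKHS of continuous real-valued functions on `Φ ⊆ ℝ^D`,
`Hin` a vector-valued RKHS of continuous functions from `Ω ⊆ ℝ^d` with values in `Φ`.
If the pair `(f, g)` minimizes
`J_{λ,μ}(f,g) = Σ_j |f(g(x_j)) − y_j|² + λ‖f‖² + μ‖g‖²` over all pairs, then
`g ∈ V_X = span{𝐊(x_i,·) e_j : i = 1,…,N, j = 1,…,D}`. -/
theorem two_layer_least_squares_representer
    (D d N : ℕ)
    (Φ : Set (Euc D)) (Ω : Set (Euc d))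
    (Hout : Type*) [NormedAddCommGroup Hout] [InnerProductSpace ℝ Hout] [CompleteSpace Hout]
    (Hin : Type*) [NormedAddCommGroup Hin] [InnerProductSpace ℝ Hin] [CompleteSpace Hin]
    (Vout : RKHS' (↥Φ) Hout)
    (houtCont : ∀ f : Hout, Continuous (Vout.eval f))
    (Vin : VRKHS (↥Ω) D Hin)
    (hinCont : ∀ g : Hin, Continuous (Vin.eval g))
    (hrange : ∀ (g : Hin) (x : Ω), Vin.eval g x ∈ Φ)
    (x : Fin N → ↥Ω) (hx : Function.Injective x) (y : Fin N → ℝ)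
    (lam mu : ℝ) (hlam : 0 < lam) (hmu : 0 < mu)
    (f : Hout) (g : Hin)
    (hmin : ∀ (f' : Hout) (g' : Hin),
        (∑ j, |Vout.eval f ⟨Vin.eval g (x j), hrange g (x j)⟩ - y j| ^ 2)
            + lam * ‖f‖ ^ 2 + mu * ‖g‖ ^ 2 ≤
          (∑ j, |Vout.eval f' ⟨Vin.eval g' (x j), hrange g' (x j)⟩ - y j| ^ 2)
            + lam * ‖f'‖ ^ 2 + mu * ‖g'‖ ^ 2) :
    g ∈ Submodule.span ℝ (Set.range fun p : Fin N × Fin D =>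
      Vin.kfun (x p.1) (EuclideanSpace.single p.2 1)) :=
  two_layer_least_squares_representer_general D d N Φ Ω Hout Hin Vout Vin hrange x y lam mu hmu f g
    hmin
end
end

section
/- Existence of a minimizer for the finite-dimensional two-layer regression problem (Reg): Let K : ℝ^D × ℝ^D → ℝ be a continuous kernel (so that for any finite set of points the matrix (K(u_n, u_m))_{n,m} is symmetric positive semidefinite), let x_1, …, x_N ∈ Ω ⊆ ℝ^d, let 𝐊 : Ω × Ω → ℝ^{D×D} be a matrix-valued kernel whose block matrix 𝐊̲ ∈ ℝ^{ND×ND} with blocks 𝐊(x_i, x_j) is symmetric positive definite, and let λ, μ > 0. For c ∈ ℝ^{ND} define g_c(x) = Σ_{j=1}^N Σ_{ℓ=1}^D c_{j,ℓ} 𝐊(x_j, x) e_ℓ, the matrix Q(c) = (K(g_c(x_n), g_c(x_m)))_{n,m=1}^N, A(c) = (Q(c) + λI)^{−1}, and the objective F(c) = λ yᵀ A(c) Q(c) A(c) y + μ cᵀ 𝐊̲ c + yᵀ (I − Q(c)A(c))ᵀ (I − Q(c)A(c)) y for a fixed y ∈ ℝ^N. Then F is continuous, satisfies F(c) ≥ μ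 λ_min(𝐊̲) ‖c‖²_2 where λ_min(𝐊̲) > 0 is the smallest eigenvalue of 𝐊̲, and F attains its global minimum on ℝ^{ND}. -/
/-!
The data-fit part of `F(c)` is the optimal value of a kernel ridge regression with the positive
semidefinite Gram matrix `Q(c)`, so it is nonnegative, and it depends continuously on `c` because
`Q(c) + λI` stays positive definite, hence invertible. The regulariser `μ cᵀ𝐊̲c` is at least
`μ λ_min(𝐊̲) ‖c‖²` by the spectral theorem, so `F` is continuous and coercive on the finite-dimensional
space `ℝ^{ND}` and therefore attains its minimum.
-/

open Matrix

noncomputable section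

namespace Matrix

variable {n : Type*} [Fintype n] [DecidableEq n]

open scoped MatrixOrder in
theorem IsHermitian.iInf_eigenvalues_mul_dotProduct_self_le {M : Matrix n n ℝ}
    (hM : M.IsHermitian) (v : n → ℝ) :
    (⨅ i, hM.eigenvalues i) * (v ⬝ᵥ v) ≤ v ⬝ᵥ M *ᵥ v := by
  have hle : algebraMap ℝ (Matrix n n ℝ) (⨅ i, hM.eigenvalues i) ≤ M := by
    rw [algebraMap_le_iff_le_spectrum (a := M) hM, hM.spectrum_real_eq_range_eigenvalues]
    rintro _ ⟨i, rfl⟩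
    exact ciInf_le (Set.finite_range _).bddBelow i
  have := (le_iff.mp hle).dotProduct_mulVec_nonneg v
  rwa [sub_mulVec, dotProduct_sub, sub_nonneg, Algebra.algebraMap_eq_smul_one, smul_mulVec,
    one_mulVec, dotProduct_smul, smul_eq_mul, star_trivial] at this

theorem PosDef.iInf_eigenvalues_pos [Nonempty n] {M : Matrix n n ℝ} (hM : M.PosDef) :
    0 < ⨅ i, hM.1.eigenvalues i := by
  obtain ⟨i, hi⟩ := Finite.exists_min hM.1.eigenvalues
  exact (hM.eigenvalues_pos i).trans_le (le_ciInf hi)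

end Matrix

theorem Continuous.matrix_inv {X 𝕜 n : Type*} [TopologicalSpace X] [Fintype n] [DecidableEq n]
    [Field 𝕜] [TopologicalSpace 𝕜] [IsTopologicalDivisionRing 𝕜]
    {A : X → Matrix n n 𝕜} (hA : Continuous A) (h : ∀ x, (A x).det ≠ 0) :
    Continuous fun x => (A x)⁻¹ :=
  continuous_iff_continuousAt.2 fun x =>
    (continuousAt_matrix_inv _ (by rw [Ring.inverse_eq_inv']; exact continuousAt_inv₀ (h x))).comp
      hA.continuousAt

theorem Continuous.exists_forall_le_of_mul_sq_norm_le {E : Type*} [NormedAddCommGroup E]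
    [ProperSpace E] {f : E → ℝ} (hf : Continuous f) {α : ℝ} (hα : 0 < α)
    (hf_ge : ∀ x, α * ‖x‖ ^ 2 ≤ f x) : ∃ x, ∀ y, f x ≤ f y :=
  hf.exists_forall_le <| Filter.tendsto_atTop_mono hf_ge <|
    ((Filter.tendsto_pow_atTop two_ne_zero).comp tendsto_norm_cocompact_atTop).const_mul_atTop hα

theorem EuclideanSpace.norm_sq_eq_dotProduct {ι : Type*} [Fintype ι] (x : EuclideanSpace ℝ ι) :
    ‖x‖ ^ 2 = x.ofLp ⬝ᵥ x.ofLp := by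
  rw [← real_inner_self_eq_norm_sq, EuclideanSpace.inner_eq_star_dotProduct, star_trivial]

section RidgeFit

variable {n : Type*} [Fintype n] [DecidableEq n]

/-- With `A = (Q + λI)⁻¹`, this is the value `λ aᵀQa + ‖y - Qa‖²` of kernel ridge regression
at its minimizer `a = Ay`. -/
def ridgeFit (lam : ℝ) (Q : Matrix n n ℝ) (y : n → ℝ) : ℝ :=
  lam * (y ⬝ᵥ ((Q + lam • 1)⁻¹ * Q * (Q + lam • 1)⁻¹) *ᵥ y) +
    ((1 - Q * (Q + lam • 1)⁻¹) *ᵥ y ⬝ᵥ (1 - Q * (Q + lam • 1)⁻¹) *ᵥ y)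

theorem ridgeFit_nonneg {lam : ℝ} {Q : Matrix n n ℝ} (hQ : Q.PosSemidef) (hlam : 0 ≤ lam)
    (y : n → ℝ) : 0 ≤ ridgeFit lam Q y := by
  have hA : (Q + lam • 1)⁻¹.PosSemidef := (hQ.add (PosSemidef.one.smul hlam)).inv
  have hAQA : ((Q + lam • 1)⁻¹ * Q * (Q + lam • 1)⁻¹).PosSemidef := by
    have := hQ.mul_mul_conjTranspose_same (Q + lam • 1)⁻¹
    rwa [hA.isHermitian.eq] at this
  refine add_nonneg (mul_nonneg hlam ?_) ?_
  · simpa only [star_trivial] using hAQA.dotProduct_mulVec_nonneg y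
  · simpa only [star_trivial] using dotProduct_star_self_nonneg ((1 - Q * (Q + lam • 1)⁻¹) *ᵥ y)

theorem Continuous.ridgeFit {X : Type*} [TopologicalSpace X] {lam : ℝ} {Q : X → Matrix n n ℝ}
    (hQ : Continuous Q) (hdet : ∀ x, (Q x + lam • 1).det ≠ 0) (y : n → ℝ) :
    Continuous fun x => ridgeFit lam (Q x) y := by
  have hA : Continuous fun x => (Q x + lam • 1)⁻¹ := (hQ.add continuous_const).matrix_inv hdet
  unfold _root_.ridgeFit
  fun_prop

end RidgeFit

theorem two_layer_regression_minimizer_exists_general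
    (D d N : ℕ) (hN : 0 < N) (hD : 0 < D)
    (K : Euc D → Euc D → ℝ)
    (hKcont : Continuous fun p : Euc D × Euc D => K p.1 p.2)
    (hKpsd : ∀ (n : ℕ) (u : Fin n → Euc D),
        Matrix.PosSemidef (Matrix.of fun i j => K (u i) (u j)))
    (Ω : Set (Euc d)) (x : Fin N → ↥Ω)
    (Kb : ↥Ω → ↥Ω → Matrix (Fin D) (Fin D) ℝ)
    (KB : Matrix (Fin N × Fin D) (Fin N × Fin D) ℝ)
    (hKBpd : KB.PosDef)
    (lam mu : ℝ) (hlam : 0 < lam) (hmu : 0 < mu)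
    (y : Fin N → ℝ)
    (gc : EuclideanSpace ℝ (Fin N × Fin D) → Fin N → Euc D)
    (hgc : ∀ c n i, gc c n i = ∑ j, ∑ ℓ, c (j, ℓ) * Kb (x j) (x n) i ℓ)
    (Q : EuclideanSpace ℝ (Fin N × Fin D) → Matrix (Fin N) (Fin N) ℝ)
    (hQ : ∀ c n m, Q c n m = K (gc c n) (gc c m))
    (F : EuclideanSpace ℝ (Fin N × Fin D) → ℝ)
    (hF : ∀ c, F c =
        lam * (y ⬝ᵥ ((Q c + lam • 1)⁻¹ * Q c * (Q c + lam • 1)⁻¹).mulVec y)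
        + mu * ((fun p => c p) ⬝ᵥ KB.mulVec fun p => c p)
        + (((1 : Matrix (Fin N) (Fin N) ℝ) - Q c * (Q c + lam • 1)⁻¹).mulVec y ⬝ᵥ
            ((1 : Matrix (Fin N) (Fin N) ℝ) - Q c * (Q c + lam • 1)⁻¹).mulVec y)) :
    Continuous F ∧
    0 < (⨅ p, hKBpd.1.eigenvalues p) ∧
    (∀ c, mu * (⨅ p, hKBpd.1.eigenvalues p) * ‖c‖ ^ 2 ≤ F c) ∧
    ∃ cmin, ∀ c, F cmin ≤ F c := by
  have : Nonempty (Fin N × Fin D) := ⟨(⟨0, hN⟩, ⟨0, hD⟩)⟩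
  have hF' : F = fun c => ridgeFit lam (Q c) y + mu * (c.ofLp ⬝ᵥ KB *ᵥ c.ofLp) :=
    funext fun c => (hF c).trans (add_right_comm _ _ _)
  have hQ_eq : Q = fun c => of fun n m => K (gc c n) (gc c m) :=
    funext fun c => Matrix.ext (hQ c)
  have hgc_eq : gc = fun c n => WithLp.toLp 2 fun i => ∑ j, ∑ ℓ, c (j, ℓ) * Kb (x j) (x n) i ℓ :=
    funext fun c => funext fun n => PiLp.ext (hgc c n)
  have hQ_psd : ∀ c, (Q c).PosSemidef := fun c => hQ_eq ▸ hKpsd N (gc c)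
  have hgc_cont : Continuous gc := by
    rw [hgc_eq]
    fun_prop
  have hQ_cont : Continuous Q := hQ_eq ▸ continuous_matrix fun n m =>
    hKcont.comp (((continuous_apply n).comp hgc_cont).prodMk ((continuous_apply m).comp hgc_cont))
  have hdet : ∀ c, (Q c + lam • 1).det ≠ 0 := fun c =>
    (PosDef.posSemidef_add (hQ_psd c) (PosDef.one.smul hlam)).det_pos.ne'
  have hF_cont : Continuous F := hF' ▸ (hQ_cont.ridgeFit hdet y).add (by fun_prop)
  have hF_ge : ∀ c, mu * (⨅ p, hKBpd.1.eigenvalues p) * ‖c‖ ^ 2 ≤ F c := fun c => by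
    rw [hF', EuclideanSpace.norm_sq_eq_dotProduct, mul_assoc]
    exact le_add_of_nonneg_of_le (ridgeFit_nonneg (hQ_psd c) hlam.le y)
      (mul_le_mul_of_nonneg_left (hKBpd.1.iInf_eigenvalues_mul_dotProduct_self_le c.ofLp) hmu.le)
  exact ⟨hF_cont, hKBpd.iInf_eigenvalues_pos, hF_ge,
    hF_cont.exists_forall_le_of_mul_sq_norm_le (mul_pos hmu hKBpd.iInf_eigenvalues_pos) hF_ge⟩

/-- **Existence of a minimizer for the finite-dimensional two-layer regression problem
(Reg).**  `K` is a continuous (symmetric, positive semidefinite) scalar kernel on `ℝ^D`,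
`𝐊ᵇ` a matrix-valued kernel on `Ω` whose block kernel matrix `KB` at the points
`x_1, …, x_N` is symmetric positive definite, and `λ, μ > 0`.  For coefficients
`c ∈ ℝ^{ND}`, `gc c m = Σ_{j,ℓ} c_{j,ℓ} 𝐊ᵇ(x_j, x_m) e_ℓ`, `Q c` is the outer kernel
matrix `(K(gc c n, gc c m))_{n,m}`, and `F` is the objective of problem (Reg).  Then `F`
is continuous, bounded below by `μ λ_min(KB) ‖c‖²` with `λ_min(KB) > 0` the smallest
eigenvalue of `KB`, and attains its global minimum. -/
theorem two_layer_regression_minimizer_exists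
    (D d N : ℕ) (hN : 0 < N) (hD : 0 < D)
    (K : Euc D → Euc D → ℝ)
    (hKcont : Continuous fun p : Euc D × Euc D => K p.1 p.2)
    (hKsymm : ∀ u v, K u v = K v u)
    (hKpsd : ∀ (n : ℕ) (u : Fin n → Euc D),
        Matrix.PosSemidef (Matrix.of fun i j => K (u i) (u j)))
    (Ω : Set (Euc d)) (x : Fin N → ↥Ω)
    (Kb : ↥Ω → ↥Ω → Matrix (Fin D) (Fin D) ℝ)
    (KB : Matrix (Fin N × Fin D) (Fin N × Fin D) ℝ)
    (hKB : ∀ p q, KB p q = Kb (x p.1) (x q.1) p.2 q.2)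
    (hKBpd : KB.PosDef)
    (lam mu : ℝ) (hlam : 0 < lam) (hmu : 0 < mu)
    (y : Fin N → ℝ)
    (gc : EuclideanSpace ℝ (Fin N × Fin D) → Fin N → Euc D)
    (hgc : ∀ c n i, gc c n i = ∑ j, ∑ ℓ, c (j, ℓ) * Kb (x j) (x n) i ℓ)
    (Q : EuclideanSpace ℝ (Fin N × Fin D) → Matrix (Fin N) (Fin N) ℝ)
    (hQ : ∀ c n m, Q c n m = K (gc c n) (gc c m))
    (F : EuclideanSpace ℝ (Fin N × Fin D) → ℝ)
    (hF : ∀ c, F c =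
        lam * (y ⬝ᵥ ((Q c + lam • 1)⁻¹ * Q c * (Q c + lam • 1)⁻¹).mulVec y)
        + mu * ((fun p => c p) ⬝ᵥ KB.mulVec fun p => c p)
        + (((1 : Matrix (Fin N) (Fin N) ℝ) - Q c * (Q c + lam • 1)⁻¹).mulVec y ⬝ᵥ
            ((1 : Matrix (Fin N) (Fin N) ℝ) - Q c * (Q c + lam • 1)⁻¹).mulVec y)) :
    Continuous F ∧
    0 < (⨅ p, hKBpd.1.eigenvalues p) ∧
    (∀ c, mu * (⨅ p, hKBpd.1.eigenvalues p) * ‖c‖ ^ 2 ≤ F c) ∧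
    ∃ cmin, ∀ c, F cmin ≤ F c :=
  two_layer_regression_minimizer_exists_general D d N hN hD K hKcont hKpsd Ω x Kb KB hKBpd lam mu
    hlam hmu y gc hgc Q hQ F hF
end
end
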